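/- Let $\Sigma$ be an alphabet with $s \geq 2$ characters, $\sigma \in \Sigma$, and $w \geq d \geq 1$. The condensed $d$-neighborhood of the unary word $\sigma^w$ has exactly $\sum_{m=w-d}^{w} \binom{m-1}{d+m-w}(s-1)^{d+m-w}$ elements. -/

import Mathlib

/-!
Against a unary word the edit distance is explicit:
`d(U, σ ^ w) = max |U| w - min (#σ U) w`, where `#σ U` counts the occurrences of `σ` in `U`.
If `d = w` the empty word is already within distance `d`, so the condensed neighbourhood is `{[]}`.
If `d < w`, a word lies in the condensed neighbourhood exactly when it has the form `V ++ [σ]` with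
`|V| < w` and `#σ V = w - d - 1`: it must end in `σ`, since otherwise deleting the last letter stays
within distance `d`. Such words of length `m` are counted by choosing the positions of the `σ`s in
`V` and filling the other `d + m - w` positions with one of the `s - 1` other letters.
-/

structure Levenshtein.Cost (α β δ : Type*) where
  delete : α → δ
  insert : β → δ
  substitute : α → β → δ

def Levenshtein.defaultCost {α : Type*} [DecidableEq α] : Levenshtein.Cost α α ℕ where
  delete _ := 1
  insert _ := 1
  substitute a b := if a = b then 0 else 1

def Levenshtein.impl {α β δ : Type*} [AddZeroClass δ] [Min δ]
    (C : Levenshtein.Cost α β δ) (xs : List α) (y : β) (d : {r : List δ // 0 < r.length}) :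
    {r : List δ // 0 < r.length} :=
  let ⟨ds, w⟩ := d
  xs.zip (ds.zip ds.tail) |>.foldr
    (init := ⟨[C.insert y + ds.getLast (List.length_pos_iff.mp w)], by simp⟩)
    (fun ⟨x, d₀, d₁⟩ ⟨r, w⟩ =>
      ⟨min (C.delete x + r[0]) (min (C.insert y + d₀) (C.substitute x y + d₁)) :: r, by simp⟩)

def suffixLevenshtein {α β δ : Type*} [AddZeroClass δ] [Min δ]
    (C : Levenshtein.Cost α β δ) (xs : List α) (ys : List β) :
    {r : List δ // 0 < r.length} :=
  ys.foldr
    (Levenshtein.impl C xs)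
    (xs.foldr (init := ⟨[0], by simp⟩) (fun a ⟨r, w⟩ => ⟨(C.delete a + r[0]) :: r, by simp⟩))

def levenshtein {α β δ : Type*} [AddZeroClass δ] [Min δ]
    (C : Levenshtein.Cost α β δ) (xs : List α) (ys : List β) : δ :=
  let ⟨r, w⟩ := suffixLevenshtein C xs ys
  r[0]

section Recursion

variable {α β δ : Type*} [AddZeroClass δ] [Min δ] (C : Levenshtein.Cost α β δ)

theorem Levenshtein.impl_length (xs : List α) (y : β) (d : {r : List δ // 0 < r.length})
    (h : d.1.length = xs.length + 1) :
    (Levenshtein.impl C xs y d).1.length = xs.length + 1 := by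
  induction xs generalizing d with
  | nil => rfl
  | cons x xs ih =>
    rcases d with ⟨_ | ⟨_, _ | ⟨d₂, ds⟩⟩, _⟩
    · simp at h
    · simp at h
    · exact congrArg (· + 1) (ih ⟨d₂ :: ds, by simp⟩ (by simpa using h))

theorem suffixLevenshtein_length (xs : List α) (ys : List β) :
    (suffixLevenshtein C xs ys).1.length = xs.length + 1 := by
  induction ys with
  | nil => induction xs <;> simp_all [suffixLevenshtein]
  | cons y ys ih => exact Levenshtein.impl_length C xs y _ ih

theorem Levenshtein.impl_cons (x : α) (xs : List α) (y : β) (d : δ) (ds : List δ) (h)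
    (hds : 0 < ds.length) :
    (Levenshtein.impl C (x :: xs) y ⟨d :: ds, h⟩).1 =
      min (C.delete x + (Levenshtein.impl C xs y ⟨ds, hds⟩).1[0]'(Levenshtein.impl C xs y _).2)
        (min (C.insert y + d) (C.substitute x y + ds[0])) ::
        (Levenshtein.impl C xs y ⟨ds, hds⟩).1 := by
  cases ds
  · simp at hds
  · rfl

theorem suffixLevenshtein_cons₁ (x : α) (xs : List α) (ys : List β) :
    (suffixLevenshtein C (x :: xs) ys).1 =
      levenshtein C (x :: xs) ys :: (suffixLevenshtein C xs ys).1 := by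
  induction ys with
  | nil => rfl
  | cons y ys ih =>
    have hds : 0 < (suffixLevenshtein C xs ys).1.length := by simp [suffixLevenshtein_length]
    have hs : suffixLevenshtein C (x :: xs) ys = ⟨_, List.length_pos_of_mem List.mem_cons_self⟩ :=
      Subtype.ext ih
    have key : (suffixLevenshtein C (x :: xs) (y :: ys)).1 = _ :=
      (congrArg (fun r => (Levenshtein.impl C (x :: xs) y r).1) hs).trans
        (Levenshtein.impl_cons C x xs y _ _ _ hds)
    rw [key]
    congr 1
    unfold levenshtein
    simp only [key]
    rfl

theorem levenshtein_nil_cons (y : β) (ys : List β) :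
    levenshtein C [] (y :: ys) = C.insert y + levenshtein C [] ys := by
  have h := suffixLevenshtein_length C ([] : List α) ys
  unfold levenshtein
  change (Levenshtein.impl C [] y (suffixLevenshtein C [] ys)).1[0]'(Levenshtein.impl C [] y _).2 = _
  generalize suffixLevenshtein C ([] : List α) ys = r at h ⊢
  rcases r with ⟨_ | ⟨r, _ | _⟩, _⟩
  · simp at h
  · rfl
  · simp at h

theorem levenshtein_cons_nil (x : α) (xs : List α) :
    levenshtein C (x :: xs) [] = C.delete x + levenshtein C xs [] :=
  rfl

theorem levenshtein_cons_cons (x : α) (xs : List α) (y : β) (ys : List β) :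
    levenshtein C (x :: xs) (y :: ys) =
      min (C.delete x + levenshtein C xs (y :: ys))
        (min (C.insert y + levenshtein C (x :: xs) ys) (C.substitute x y + levenshtein C xs ys)) := by
  have hds : 0 < (suffixLevenshtein C xs ys).1.length := by simp [suffixLevenshtein_length]
  have hs : suffixLevenshtein C (x :: xs) ys = ⟨_, List.length_pos_of_mem List.mem_cons_self⟩ :=
    Subtype.ext (suffixLevenshtein_cons₁ C x xs ys)
  change (Levenshtein.impl C (x :: xs) y (suffixLevenshtein C (x :: xs) ys)).1[0]'
    (Levenshtein.impl C (x :: xs) y _).2 = _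
  simp only [hs, Levenshtein.impl_cons C x xs y _ _ _ hds, List.getElem_cons_zero]
  rfl

end Recursion

theorem levenshtein_defaultCost_replicate {α : Type*} [DecidableEq α] (U : List α) (σ : α)
    (w : ℕ) :
    levenshtein Levenshtein.defaultCost U (List.replicate w σ) =
      max U.length w - min (U.count σ) w := by
  induction U generalizing w with
  | nil =>
    induction w with
    | zero => rfl
    | succ w ih =>
      rw [List.replicate_succ, levenshtein_nil_cons, ih]
      simp [Levenshtein.defaultCost, add_comm]
  | cons x xs ih =>
    induction w with
    | zero =>
      rw [List.replicate_zero, levenshtein_cons_nil, ← List.replicate_zero, ih]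
      simp only [Levenshtein.defaultCost, List.length_cons, List.count_cons]
      omega
    | succ w ihw =>
      have hc : xs.count σ ≤ xs.length := List.count_le_length
      rw [List.replicate_succ, levenshtein_cons_cons, ← List.replicate_succ, ih, ih, ihw]
      by_cases hx : x = σ
      · subst hx
        simp only [Levenshtein.defaultCost, List.length_cons, List.count_cons_self, if_pos]
        omega
      · simp only [Levenshtein.defaultCost, List.length_cons, List.count_cons_of_ne hx, if_neg hx]
        omega

section Neighborhood

variable {α : Type*} [DecidableEq α]

def neighborhood (W : List α) (d : ℕ) : Set (List α) :=
  {U | levenshtein Levenshtein.defaultCost U W ≤ d}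

def condensedNeighborhood (W : List α) (d : ℕ) : Set (List α) :=
  {U | U ∈ neighborhood W d ∧ ∀ P, P <+: U → P ≠ U → P ∉ neighborhood W d}

theorem condensedNeighborhood_eq_singleton_nil {W : List α} {d : ℕ}
    (h : [] ∈ neighborhood W d) : condensedNeighborhood W d = {[]} := by
  ext U
  refine ⟨fun hU => ?_, ?_⟩
  · by_contra hne
    exact hU.2 [] U.nil_prefix (Ne.symm hne) h
  · rintro rfl
    exact ⟨h, fun P hP hne => absurd (List.prefix_nil.mp hP) hne⟩

theorem mem_neighborhood_replicate {U : List α} {σ : α} {w d : ℕ} :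
    U ∈ neighborhood (List.replicate w σ) d ↔ max U.length w - min (U.count σ) w ≤ d := by
  rw [← levenshtein_defaultCost_replicate]
  rfl

theorem condensedNeighborhood_replicate_of_lt {σ : α} {w d : ℕ} (h : d < w) :
    condensedNeighborhood (List.replicate w σ) d =
      (· ++ [σ]) '' {V | V.length < w ∧ V.count σ = w - d - 1} := by
  ext U
  simp only [condensedNeighborhood, mem_neighborhood_replicate, Set.mem_ofPred_eq, Set.mem_image]
  constructor
  · rintro ⟨hU, hmin⟩
    obtain rfl | ⟨V, a, rfl⟩ := U.eq_nil_or_concat'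
    · simp only [List.length_nil, List.count_nil] at hU
      omega
    have hV := hmin V (List.prefix_append V [a]) (by simp)
    have hc : V.count σ ≤ V.length := List.count_le_length
    by_cases ha : a = σ
    · subst ha
      simp only [List.length_append, List.length_singleton, List.count_append,
        List.count_singleton_self] at hU
      exact ⟨V, by omega, rfl⟩
    · simp only [List.length_append, List.length_singleton, List.count_append,
        List.count_cons_of_ne ha, List.count_nil] at hU
      omega
  · rintro ⟨V, ⟨hlen, hcount⟩, rfl⟩
    refine ⟨by simp only [List.length_append, List.length_singleton, List.count_append,
      List.count_singleton_self]; omega, fun P hP hne => ?_⟩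
    have hPV : P <+: V := (List.prefix_concat_iff.mp hP).resolve_left hne
    have := hPV.length_le
    have := hPV.count_le σ
    omega

end Neighborhood

section Counting

open Finset

variable (α : Type*) [Fintype α] [DecidableEq α]

def listsOfLength : ℕ → Finset (List α)
  | 0 => {[]}
  | n + 1 => univ.biUnion fun a => (listsOfLength n).image (a :: ·)

variable {α}

theorem mem_listsOfLength {n : ℕ} {U : List α} : U ∈ listsOfLength α n ↔ U.length = n := by
  induction n generalizing U with
  | zero => simp [listsOfLength]
  | succ n ih => cases U <;> simp [listsOfLength, ih]

theorem card_filter_listsOfLength_succ (p : List α → Prop) [DecidablePred p] (n : ℕ) :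
    #{U ∈ listsOfLength α (n + 1) | p U} = ∑ a, #{U ∈ listsOfLength α n | p (a :: U)} := by
  rw [listsOfLength, filter_biUnion, card_biUnion]
  · simp only [filter_image, card_image_of_injective _ List.cons_injective]
  · intro a _ b _ hab
    simp only [Function.onFun, disjoint_left, mem_filter, mem_image]
    rintro _ ⟨⟨U, _, rfl⟩, _⟩ ⟨⟨V, _, hV⟩, _⟩
    exact hab (List.cons_eq_cons.mp hV).1.symm

theorem card_filter_count_listsOfLength_succ (σ : α) (n j : ℕ) :
    #{U ∈ listsOfLength α (n + 1) | U.count σ = j} =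
      #{U ∈ listsOfLength α n | U.count σ + 1 = j} +
        (Fintype.card α - 1) * #{U ∈ listsOfLength α n | U.count σ = j} := by
  have hne : ∀ a ∈ univ.erase σ, #{U ∈ listsOfLength α n | (a :: U).count σ = j} =
      #{U ∈ listsOfLength α n | U.count σ = j} := fun a ha => by
    simp [ne_of_mem_erase ha]
  rw [card_filter_listsOfLength_succ, ← add_sum_erase _ _ (mem_univ σ), sum_congr rfl hne,
    sum_const, card_erase_of_mem (mem_univ σ), card_univ, smul_eq_mul]
  simp

theorem card_filter_count_listsOfLength (σ : α) (n j : ℕ) :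
    #{U ∈ listsOfLength α n | U.count σ = j} = n.choose j * (Fintype.card α - 1) ^ (n - j) := by
  induction n generalizing j with
  | zero => cases j <;> simp [listsOfLength, filter_singleton]
  | succ n ih =>
    rw [card_filter_count_listsOfLength_succ]
    cases j with
    | zero => simp [pow_succ, ih, mul_comm]
    | succ j =>
      simp only [Nat.add_right_cancel_iff, ih]
      rw [Nat.choose_succ_succ', add_mul, Nat.add_sub_add_right]
      congr 1
      rcases lt_or_ge j n with hjn | hnj
      · rw [show n - j = n - (j + 1) + 1 by omega, pow_succ]
        ring
      · simp [Nat.choose_eq_zero_of_lt (Nat.lt_succ_of_le hnj)]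

theorem ncard_setOf_length_lt_count_eq (σ : α) (w j : ℕ) :
    {V : List α | V.length < w ∧ V.count σ = j}.ncard =
      ∑ m ∈ Icc (j + 1) w, (m - 1).choose j * (Fintype.card α - 1) ^ (m - 1 - j) := by
  have hset : {V : List α | V.length < w ∧ V.count σ = j} =
      ↑((Icc (j + 1) w).biUnion fun m => {V ∈ listsOfLength α (m - 1) | V.count σ = j}) := by
    ext V
    simp only [Set.mem_ofPred_eq, coe_biUnion, coe_filter, mem_listsOfLength, Set.mem_iUnion,
      mem_coe, mem_Icc, exists_prop]
    constructor
    · rintro ⟨hlen, rfl⟩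
      exact ⟨V.length + 1, ⟨by simpa using List.count_le_length, hlen⟩, rfl, rfl⟩
    · rintro ⟨m, ⟨hjm, hmw⟩, hlen, hcount⟩
      omega
  rw [hset, Set.ncard_coe_finset, card_biUnion]
  · exact sum_congr rfl fun m _ => card_filter_count_listsOfLength σ (m - 1) j
  · intro m hm m' hm' hne
    rw [mem_coe, mem_Icc] at hm hm'
    simp only [Function.onFun, disjoint_left, mem_filter, mem_listsOfLength]
    rintro V ⟨hV, -⟩ ⟨hV', -⟩
    omega

end Counting

theorem stmt_13_general {α : Type*} [Fintype α] [DecidableEq α] (s : ℕ)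
    (hcard : Fintype.card α = s) (σ : α) (w d : ℕ) (hdw : d ≤ w) :
    {U : List α | levenshtein Levenshtein.defaultCost U (List.replicate w σ) ≤ d ∧
        ∀ P : List α, P <+: U → P ≠ U →
          ¬ levenshtein Levenshtein.defaultCost P (List.replicate w σ) ≤ d}.ncard
      = ∑ m ∈ Finset.Icc (w - d) w,
          Nat.choose (m - 1) (d + m - w) * (s - 1) ^ (d + m - w) := by
  change (condensedNeighborhood (List.replicate w σ) d).ncard = _
  subst hcard
  rcases hdw.eq_or_lt with rfl | hlt
  · have hnil : [] ∈ neighborhood (List.replicate d σ) d := by simp [mem_neighborhood_replicate]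
    rw [condensedNeighborhood_eq_singleton_nil hnil, Set.ncard_singleton, Nat.sub_self,
      Finset.sum_eq_single_of_mem 0 (by simp) fun m _ hm => by
        simp [Nat.choose_eq_zero_of_lt (Nat.sub_one_lt hm)]]
    simp
  · rw [condensedNeighborhood_replicate_of_lt hlt,
      Set.ncard_image_of_injective _ (List.append_left_injective [σ]),
      ncard_setOf_length_lt_count_eq, show w - d - 1 + 1 = w - d by omega]
    refine Finset.sum_congr rfl fun m hm => ?_
    rw [Finset.mem_Icc] at hm
    rw [← Nat.choose_symm (by omega), show m - 1 - (w - d - 1) = d + m - w by omega]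

theorem stmt_13 {α : Type*} [Fintype α] [DecidableEq α] (s : ℕ)
    (hcard : Fintype.card α = s) (hs : 2 ≤ s)
    (σ : α) (w d : ℕ) (hd : 1 ≤ d) (hdw : d ≤ w) :
    {U : List α | levenshtein Levenshtein.defaultCost U (List.replicate w σ) ≤ d ∧
        ∀ P : List α, P <+: U → P ≠ U →
          ¬ levenshtein Levenshtein.defaultCost P (List.replicate w σ) ≤ d}.ncard
      = ∑ m ∈ Finset.Icc (w - d) w,
          Nat.choose (m - 1) (d + m - w) * (s - 1) ^ (d + m - w) :=
  stmt_13_general s hcard σ w d hdw
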